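/- arXiv:2312.04981 — 4 statements merged into one kernel-verified Lean document; each statement's English description precedes it below -/
import Mathlib

section
/- Let k ∈ ℤ and let n ≥ 1 be an integer. Then for all complex numbers u_1, …, u_n, (1/(2πi)) ∮_{|w|=1} exp( w + ∑_{j=1}^n u_j/w^{2j} ) · w^{−(k+1)} dw = ∑_{m_2, …, m_n = 0}^{∞} ( ∏_{j=2}^n u_j^{m_j}/m_j! ) · g_{k + 2∑_{j=2}^n j·m_j}(u_1), where the right-hand side is an absolutely convergent multiple series (for n = 1 the statement reads that the integral equals g_k(u_1)). -/
/-!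
On the unit circle, `exp (∑_{j ≥ 2} u_j w^{-2j}) = ∏_j ∑_{m_j} (u_j w^{-2j})^{m_j} / m_j!` is an
absolutely convergent multiple series whose terms are bounded, uniformly in `w`, by those of
`∏_j exp ‖u_j‖`. The remaining factor `exp (w + u_1/w²) w^{-(k+1)}` has modulus at most
`exp (1 + ‖u_1‖)` there, so dominated convergence allows integrating term by term, and each
monomial `w^{-2 ∑ j m_j}` just shifts the index of `g`.
-/

open scoped Nat

/-- The hypergeometric function `g_m(u) = (1/(2πi)) ∮_{|w|=1} e^{w + u/w²} w^{−(m+1)} dw`. -/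
noncomputable def gFun (m : ℤ) (u : ℂ) : ℂ :=
  (2 * (Real.pi : ℂ) * Complex.I)⁻¹ *
    ∮ w in C(0, 1), Complex.exp (w + u / w ^ 2) * (w ^ (m + 1))⁻¹

open Complex Metric Finset

section PiProduct

variable {R β : Type*} [NormedCommRing R]

theorem summable_norm_prod_pi {N : ℕ} {f : Fin N → β → R}
    (hf : ∀ t, Summable fun i => ‖f t i‖) :
    Summable fun m : Fin N → β => ‖∏ t, f t (m t)‖ := by
  induction N with
  | zero => exact .of_finite
  | succ N ih =>
    rw [← (Fin.consEquiv fun _ => β).summable_iff]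
    simpa [Function.comp_def, Fin.consEquiv, Fin.prod_univ_succ] using
      (hf 0).mul_norm (ih fun t => hf t.succ)

theorem hasSum_prod_pi [CompleteSpace R] {N : ℕ} {f : Fin N → β → R} {a : Fin N → R}
    (hf : ∀ t, HasSum (f t) (a t)) (hf' : ∀ t, Summable fun i => ‖f t i‖) :
    HasSum (fun m : Fin N → β => ∏ t, f t (m t)) (∏ t, a t) := by
  induction N with
  | zero => simp
  | succ N ih =>
    rw [← (Fin.consEquiv fun _ => β).hasSum_iff, Fin.prod_univ_succ]
    have htail := ih (fun t => hf t.succ) fun t => hf' t.succ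
    simpa [Function.comp_def, Fin.consEquiv, Fin.prod_univ_succ] using
      (hf 0).mul htail ((hf' 0).mul_norm (summable_norm_prod_pi fun t => hf' t.succ)).of_norm

end PiProduct

theorem summable_norm_pow_div_factorial (x : ℂ) : Summable fun n : ℕ => ‖x ^ n / (n ! : ℂ)‖ := by
  simpa [norm_div] using Real.summable_pow_div_factorial ‖x‖

theorem summable_norm_prod_pow_div_factorial {N : ℕ} (b : Fin N → ℂ) :
    Summable fun m : Fin N → ℕ => ‖∏ t, b t ^ m t / (m t)!‖ :=
  summable_norm_prod_pi (f := fun t n => b t ^ n / n !) fun t =>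
    summable_norm_pow_div_factorial (b t)

theorem hasSum_prod_pow_div_factorial {N : ℕ} (b : Fin N → ℂ) :
    HasSum (fun m : Fin N → ℕ => ∏ t, b t ^ m t / (m t)!) (exp (∑ t, b t)) := by
  rw [exp_sum, exp_eq_exp_ℂ]
  exact hasSum_prod_pi (f := fun t n => b t ^ n / n !)
    (fun t => NormedSpace.expSeries_div_hasSum_exp (b t))
    fun t => summable_norm_pow_div_factorial (b t)

-- `∑ j m_j`, with `t : Fin N` standing for `j = t + 2`
def weightedDegree {N : ℕ} (m : Fin N → ℕ) : ℤ :=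
  ∑ t : Fin N, (((t : ℕ) : ℤ) + 2) * (m t : ℤ)

theorem hasSum_exp_sum_div_pow {N : ℕ} (v : Fin N → ℂ) (w : ℂ) :
    HasSum (fun m : Fin N → ℕ => (∏ t, v t ^ m t / (m t)!) *
        (w ^ (2 * weightedDegree m))⁻¹)
      (exp (∑ t, v t / w ^ (2 * ((t : ℕ) + 2)))) := by
  have hterm : ∀ m : Fin N → ℕ, ∏ t, (v t / w ^ (2 * ((t : ℕ) + 2))) ^ m t / (m t)! =
      (∏ t, v t ^ m t / (m t)!) * (w ^ (2 * weightedDegree m))⁻¹ := by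
    intro m
    have hexp : 2 * weightedDegree m =
        ((∑ t : Fin N, 2 * ((t : ℕ) + 2) * m t : ℕ) : ℤ) := by
      push_cast [weightedDegree]
      rw [mul_sum]
      simp only [mul_assoc]
    rw [hexp, zpow_natCast, ← prod_pow_eq_pow_sum, ← prod_inv_distrib, ← prod_mul_distrib]
    refine prod_congr rfl fun t _ => ?_
    rw [div_pow, ← pow_mul]
    ring
  simpa only [hterm] using hasSum_prod_pow_div_factorial fun t => v t / w ^ (2 * ((t : ℕ) + 2))

theorem hasSum_exp_add_sum_div_pow_mul_zpow_inv (k : ℤ) {N : ℕ} (v : Fin N → ℂ) (u₁ : ℂ)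
    {w : ℂ} (hw : w ≠ 0) :
    HasSum (fun m : Fin N → ℕ => (∏ t, v t ^ m t / (m t)!) *
        (exp (w + u₁ / w ^ 2) * (w ^ (k + 2 * weightedDegree m + 1))⁻¹))
      (exp (w + u₁ / w ^ 2 + ∑ t, v t / w ^ (2 * ((t : ℕ) + 2))) * (w ^ (k + 1))⁻¹) := by
  have hterm : ∀ m : Fin N → ℕ, (∏ t, v t ^ m t / (m t)!) *
        (exp (w + u₁ / w ^ 2) * (w ^ (k + 2 * weightedDegree m + 1))⁻¹) =
      (∏ t, v t ^ m t / (m t)!) * (w ^ (2 * weightedDegree m))⁻¹ *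
        (exp (w + u₁ / w ^ 2) * (w ^ (k + 1))⁻¹) := by
    intro m
    rw [add_right_comm k, zpow_add₀ hw, mul_inv]
    ring
  have hval : exp (w + u₁ / w ^ 2 + ∑ t, v t / w ^ (2 * ((t : ℕ) + 2))) * (w ^ (k + 1))⁻¹ =
      exp (∑ t, v t / w ^ (2 * ((t : ℕ) + 2))) * (exp (w + u₁ / w ^ 2) * (w ^ (k + 1))⁻¹) := by
    rw [exp_add]
    ring
  simpa only [hterm, hval] using
    (hasSum_exp_sum_div_pow v w).mul_right (exp (w + u₁ / w ^ 2) * (w ^ (k + 1))⁻¹)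

theorem norm_exp_add_div_sq_mul_zpow_inv_le (m : ℤ) (u : ℂ) {w : ℂ} (hw : ‖w‖ = 1) :
    ‖exp (w + u / w ^ 2) * (w ^ (m + 1))⁻¹‖ ≤ Real.exp (1 + ‖u‖) := by
  rw [norm_mul, norm_inv, norm_zpow, hw, one_zpow, inv_one, mul_one, norm_exp,
    Real.exp_le_exp]
  calc (w + u / w ^ 2).re ≤ ‖w + u / w ^ 2‖ := re_le_norm _
    _ ≤ ‖w‖ + ‖u / w ^ 2‖ := norm_add_le _ _
    _ = 1 + ‖u‖ := by rw [norm_div, norm_pow, hw, one_pow, div_one]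

theorem continuousOn_exp_add_div_sq_mul_zpow_inv (m : ℤ) (u : ℂ) :
    ContinuousOn (fun w : ℂ => exp (w + u / w ^ 2) * (w ^ (m + 1))⁻¹) {0}ᶜ := by
  have hne : ∀ w ∈ ({0}ᶜ : Set ℂ), w ≠ 0 := fun _ => id
  refine ContinuousOn.mul ?_ ((continuousOn_id.zpow₀ _ fun w hw => .inl (hne w hw)).inv₀
    fun w hw => zpow_ne_zero _ (hne w hw))
  fun_prop (disch := exact fun w hw => pow_ne_zero _ (hne w hw))

theorem hasSum_circleIntegral_of_norm_le {ι E : Type*} [Countable ι] [NormedAddCommGroup E]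
    [NormedSpace ℂ E] {f : ι → ℂ → E} {F : ℂ → E} {c : ℂ} {R : ℝ} (bound : ι → ℝ)
    (hf : ∀ i, CircleIntegrable (f i) c R) (h_bound : ∀ i, ∀ w ∈ sphere c |R|, ‖f i w‖ ≤ bound i)
    (h_sum : Summable bound) (h_lim : ∀ w ∈ sphere c |R|, HasSum (fun i => f i w) (F w)) :
    HasSum (fun i => ∮ w in C(c, R), f i w) (∮ w in C(c, R), F w) := by
  refine intervalIntegral.hasSum_integral_of_dominated_convergence (fun i _ => |R| * bound i)
    (fun i => (hf i).out.def'.aestronglyMeasurable) (fun i => ?_)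
    (.of_forall fun _ _ => h_sum.mul_left |R|) intervalIntegrable_const
    (.of_forall fun θ _ => (h_lim _ (circleMap_mem_sphere' c R θ)).const_smul _)
  refine .of_forall fun θ _ => ?_
  rw [norm_smul, deriv_circleMap, norm_mul, norm_circleMap_zero, norm_I, mul_one]
  exact mul_le_mul_of_nonneg_left (h_bound i _ (circleMap_mem_sphere' c R θ)) (abs_nonneg R)

theorem sum_Icc_one_succ_eq_add_sum_fin {M : Type*} [AddCommMonoid M] (g : ℕ → M) (N : ℕ) :
    ∑ j ∈ Icc 1 (N + 1), g j = g 1 + ∑ t : Fin N, g ((t : ℕ) + 2) := by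
  rw [← Ico_add_one_right_eq_Icc, sum_Ico_eq_sum_range, Nat.add_sub_cancel, sum_range_succ',
    Fin.sum_univ_eq_sum_range fun i => g (i + 2)]
  simp only [add_comm 1, add_assoc]
  rw [add_comm]

theorem hasSum_circleIntegral_exp_add_sum_div_pow (k : ℤ) (N : ℕ) (u : ℕ → ℂ) :
    HasSum (fun m : Fin N → ℕ => (∏ t : Fin N, u ((t : ℕ) + 2) ^ m t / ((m t)! : ℂ)) *
        ∮ w in C(0, 1), exp (w + u 1 / w ^ 2) *
          (w ^ (k + 2 * weightedDegree m + 1))⁻¹)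
      (∮ w in C(0, 1), exp (w + ∑ j ∈ Icc 1 (N + 1), u j / w ^ (2 * j)) * (w ^ (k + 1))⁻¹) := by
  have hsphere : ∀ w ∈ sphere (0 : ℂ) |1|, ‖w‖ = 1 := by simp
  have hne : ∀ w ∈ sphere (0 : ℂ) |1|, w ≠ 0 := fun w hw =>
    norm_ne_zero_iff.mp (by simp [hsphere w hw])
  simp_rw [← circleIntegral.integral_const_mul]
  refine hasSum_circleIntegral_of_norm_le
    (fun m => ‖∏ t : Fin N, u ((t : ℕ) + 2) ^ m t / ((m t)! : ℂ)‖ * Real.exp (1 + ‖u 1‖))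
    (fun m => (continuousOn_const.mul ((continuousOn_exp_add_div_sq_mul_zpow_inv _ _).mono
      hne)).circleIntegrable') (fun m w hw => ?_)
    ((summable_norm_prod_pow_div_factorial _).mul_right _) fun w hw => ?_
  · rw [norm_mul]
    exact mul_le_mul_of_nonneg_left (norm_exp_add_div_sq_mul_zpow_inv_le _ _ (hsphere w hw))
      (norm_nonneg _)
  · rw [sum_Icc_one_succ_eq_add_sum_fin, ← add_assoc]
    exact hasSum_exp_add_sum_div_pow_mul_zpow_inv k _ (u 1) (hne w hw)

/-- for `k ∈ ℤ`, `n ≥ 1` and complex numbers `u_1, …, u_n`,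
`(1/(2πi)) ∮_{|w|=1} exp(w + ∑_{j=1}^n u_j/w^{2j}) w^{−(k+1)} dw
  = ∑_{m_2,…,m_n ≥ 0} (∏_{j=2}^n u_j^{m_j}/m_j!) g_{k+2∑_{j=2}^n j m_j}(u_1)`,
the right-hand side being an (unconditionally, hence absolutely) convergent multiple
series; for `n = 1` it reads that the integral equals `g_k(u_1)`.  The indices
`m_2, …, m_n` are encoded as `m : Fin (n-1) → ℕ`, with `t : Fin (n-1)`
corresponding to the index `j = t + 2`. -/
theorem stmt_7 (k : ℤ) (n : ℕ) (hn : 1 ≤ n) (u : ℕ → ℂ) :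
    HasSum
      (fun m : Fin (n - 1) → ℕ =>
        (∏ t : Fin (n - 1), u ((t : ℕ) + 2) ^ (m t) / ((m t)! : ℂ)) *
          gFun (k + 2 * ∑ t : Fin (n - 1), (((t : ℕ) : ℤ) + 2) * (m t : ℤ)) (u 1))
      ((2 * (Real.pi : ℂ) * Complex.I)⁻¹ *
        ∮ w in C(0, 1),
          Complex.exp (w + ∑ j ∈ Finset.Icc 1 n, u j / w ^ (2 * j)) * (w ^ (k + 1))⁻¹) := by
  obtain ⟨N, rfl⟩ := Nat.exists_eq_add_of_le' hn
  rw [Nat.add_sub_cancel]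
  simpa only [gFun, weightedDegree, mul_left_comm] using
    (hasSum_circleIntegral_exp_add_sum_div_pow k N u).mul_left (2 * (Real.pi : ℂ) * I)⁻¹
end

section
/- Let n ≥ 0 and k ≥ 1 be integers, let N ∈ ℂ, and let w_1, …, w_k be nonzero complex numbers. Then the n-th derivative at α = 0 of the function α ↦ e^{−Nα} / ∏_{i=1}^k (w_i² − α²) equals ( ∏_{i=1}^k w_i^{−2} ) · ∑_{m=0}^n (n choose m) · (−N)^{n−m} · m! · ∑_{l_1 + ⋯ + l_k = m, each l_j even} ∏_{i=1}^k w_i^{−l_i}, where the inner sum is over all tuples (l_1, …, l_k) of non-negative even integers summing to m. -/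
/-!
By the Leibniz rule the exponential factor contributes `(-N) ^ (n - m)` and binomial weights, so
everything reduces to the Taylor coefficients of `∏ i, (w i ^ 2 - α ^ 2)⁻¹` at `0`. The general
Leibniz rule says that Taylor coefficients of a product are sums over `antidiagonalTuple` of
products of the factors' coefficients, and the partial fraction decomposition
`(w ^ 2 - α ^ 2)⁻¹ = (2 w)⁻¹ ((w - α)⁻¹ + (w + α)⁻¹)` shows that the `m`-th Taylor coefficient of
one factor is `(w ^ (m + 2))⁻¹` for even `m` and `0` for odd `m`.
-/

open scoped Nat
open Finset Filter Topology

theorem Finset.Nat.sum_antidiagonalTuple_succ {M : Type*} [AddCommMonoid M] (k n : ℕ)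
    (f : (Fin (k + 1) → ℕ) → M) :
    ∑ l ∈ antidiagonalTuple (k + 1) n, f l =
      ∑ p ∈ antidiagonal n, ∑ l ∈ antidiagonalTuple k p.2, f (Fin.cons p.1 l) := by
  rw [Finset.sum_eq_multiset_sum, Finset.sum_eq_multiset_sum]
  simp only [Finset.Nat.antidiagonalTuple, Multiset.Nat.antidiagonalTuple,
    List.Nat.antidiagonalTuple, Multiset.map_coe, Multiset.sum_coe, List.flatMap_def,
    List.map_flatten, List.sum_flatten, List.map_map, Finset.sum_eq_multiset_sum,
    Function.comp_def]
  rfl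

theorem sum_antidiagonalTuple_prod_ite_even {K : Type*} [Field K] (k m : ℕ) (w : Fin k → K) :
    ∑ l ∈ Nat.antidiagonalTuple k m, ∏ i, (if Even (l i) then (w i ^ (l i + 2))⁻¹ else 0) =
      (∏ i, (w i ^ 2)⁻¹) *
        ∑ l ∈ (Nat.antidiagonalTuple k m).filter fun l => ∀ i, Even (l i), ∏ i, (w i ^ l i)⁻¹ := by
  rw [Finset.sum_filter, Finset.mul_sum]
  refine Finset.sum_congr rfl fun l _ => ?_
  rw [Fintype.prod_ite_zero, mul_ite, mul_zero, ← Finset.prod_mul_distrib]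
  simp only [pow_add, mul_inv, mul_comm]

section

variable {𝕜 : Type*} [NontriviallyNormedField 𝕜]

theorem iteratedDeriv_inv (w : 𝕜) (m : ℕ) :
    iteratedDeriv m Inv.inv w = (-1) ^ m * m ! * (w ^ (m + 1))⁻¹ := by
  rw [iteratedDeriv_eq_iterate, iter_deriv_inv,
    show (-1 - m : ℤ) = -((m + 1 : ℕ) : ℤ) by push_cast; ring, zpow_neg, zpow_natCast]

theorem contDiffAt_inv_sq_sub_sq_zero {w : 𝕜} (hw : w ≠ 0) {n : WithTop ℕ∞} :
    ContDiffAt 𝕜 n (fun α => (w ^ 2 - α ^ 2)⁻¹) 0 :=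
  (contDiffAt_const.sub (contDiffAt_id.pow 2)).inv (by simpa using hw)

variable [CharZero 𝕜]

theorem iteratedDeriv_fun_mul_div_factorial {f g : 𝕜 → 𝕜} {x : 𝕜} {n : ℕ}
    (hf : ContDiffAt 𝕜 n f x) (hg : ContDiffAt 𝕜 n g x) :
    iteratedDeriv n (fun y => f y * g y) x / n ! =
      ∑ p ∈ antidiagonal n,
        iteratedDeriv p.1 f x / p.1 ! * (iteratedDeriv p.2 g x / p.2 !) := by
  rw [iteratedDeriv_fun_mul hf hg, Finset.sum_div, Nat.sum_antidiagonal_eq_sum_range_succ_mk]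
  refine Finset.sum_congr rfl fun i hi => ?_
  have hin : i ≤ n := Nat.lt_succ_iff.1 (Finset.mem_range.1 hi)
  have hn : (n ! : 𝕜) ≠ 0 := Nat.cast_ne_zero.2 n.factorial_ne_zero
  rw [Nat.cast_choose 𝕜 hin]
  field_simp

theorem iteratedDeriv_fin_prod_div_factorial {k : ℕ} {f : Fin k → 𝕜 → 𝕜} {x : 𝕜} {n : ℕ}
    (hf : ∀ i, ContDiffAt 𝕜 n (f i) x) :
    iteratedDeriv n (fun y => ∏ i, f i y) x / n ! =
      ∑ l ∈ Nat.antidiagonalTuple k n, ∏ i, iteratedDeriv (l i) (f i) x / (l i)! := by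
  induction k generalizing n with
  | zero =>
    rcases n with _ | n <;> simp [iteratedDeriv_const]
  | succ k ih =>
    simp only [Fin.prod_univ_succ]
    rw [iteratedDeriv_fun_mul_div_factorial (hf 0) (contDiffAt_prod fun i _ => hf i.succ),
      Nat.sum_antidiagonalTuple_succ]
    refine Finset.sum_congr rfl fun p hp => ?_
    rw [ih fun i => (hf i.succ).of_le ?_, Finset.mul_sum]
    · simp
    · exact_mod_cast HasAntidiagonal.antidiagonal.snd_le hp

theorem iteratedDeriv_inv_sq_sub_sq_zero {w : 𝕜} (hw : w ≠ 0) (m : ℕ) :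
    iteratedDeriv m (fun α => (w ^ 2 - α ^ 2)⁻¹) 0 =
      if Even m then m ! / w ^ (m + 2) else 0 := by
  have hsub : ∀ᶠ α in 𝓝 (0 : 𝕜), w - α ≠ 0 :=
    (continuous_const.sub continuous_id).continuousAt.eventually_ne (by simpa using hw)
  have hadd : ∀ᶠ α in 𝓝 (0 : 𝕜), w + α ≠ 0 :=
    (continuous_const.add continuous_id).continuousAt.eventually_ne (by simpa using hw)
  have hpartial : (fun α => (w ^ 2 - α ^ 2)⁻¹) =ᶠ[𝓝 0]
      fun α => (2 * w)⁻¹ * ((w - α)⁻¹ + (w + α)⁻¹) := by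
    filter_upwards [hsub, hadd] with α h₁ h₂
    have h₃ : w ^ 2 - α ^ 2 ≠ 0 := by rw [sq_sub_sq]; exact mul_ne_zero h₂ h₁
    field_simp
    ring
  rw [hpartial.iteratedDeriv_eq, iteratedDeriv_const_mul_field,
    iteratedDeriv_fun_add ((contDiffAt_const.sub contDiffAt_id).inv (by simpa using hw))
      ((contDiffAt_const.add contDiffAt_id).inv (by simpa using hw)),
    iteratedDeriv_comp_const_sub, iteratedDeriv_comp_const_add]
  simp only [sub_zero, add_zero, iteratedDeriv_inv, smul_eq_mul]
  rcases Nat.even_or_odd m with h | h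
  · rw [if_pos h, h.neg_one_pow]
    field_simp
    ring
  · rw [if_neg (Nat.not_even_iff_odd.2 h), h.neg_one_pow]
    ring

theorem iteratedDeriv_prod_inv_sq_sub_sq_zero {k : ℕ} {w : Fin k → 𝕜} (hw : ∀ i, w i ≠ 0)
    (m : ℕ) :
    iteratedDeriv m (fun α => ∏ i, (w i ^ 2 - α ^ 2)⁻¹) 0 =
      m ! * ((∏ i, (w i ^ 2)⁻¹) *
        ∑ l ∈ (Nat.antidiagonalTuple k m).filter fun l => ∀ i, Even (l i),
          ∏ i, (w i ^ l i)⁻¹) := by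
  have hfac (j : ℕ) : (j ! : 𝕜) ≠ 0 := Nat.cast_ne_zero.2 j.factorial_ne_zero
  have h := iteratedDeriv_fin_prod_div_factorial (f := fun i α => (w i ^ 2 - α ^ 2)⁻¹)
    (x := 0) (n := m) fun i => contDiffAt_inv_sq_sub_sq_zero (hw i)
  rw [div_eq_iff (hfac m)] at h
  rw [h, ← sum_antidiagonalTuple_prod_ite_even, mul_comm]
  simp only [iteratedDeriv_inv_sq_sub_sq_zero (hw _), ite_div, zero_div,
    div_div_cancel_left' (hfac _)]

end

theorem stmt_8_general (n k : ℕ) (N : ℂ) (w : Fin k → ℂ) (hw : ∀ i, w i ≠ 0) :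
    iteratedDeriv n (fun α : ℂ => Complex.exp (-N * α) / ∏ i, (w i ^ 2 - α ^ 2)) 0 =
      (∏ i, (w i ^ 2)⁻¹) *
        ∑ m ∈ Finset.range (n + 1),
          (n.choose m : ℂ) * (-N) ^ (n - m) * (m ! : ℂ) *
            ∑ l ∈ (Finset.Nat.antidiagonalTuple k m).filter fun l => ∀ i, Even (l i),
              ∏ i, (w i ^ (l i))⁻¹ := by
  have hsplit : (fun α : ℂ => Complex.exp (-N * α) / ∏ i, (w i ^ 2 - α ^ 2)) =
      fun α => (∏ i, (w i ^ 2 - α ^ 2)⁻¹) * Complex.exp (-N * α) := by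
    ext α
    rw [div_eq_mul_inv, Finset.prod_inv_distrib, mul_comm]
  rw [hsplit, iteratedDeriv_fun_mul
    (contDiffAt_prod fun i _ => contDiffAt_inv_sq_sub_sq_zero (hw i)) (by fun_prop),
    Finset.mul_sum]
  refine Finset.sum_congr rfl fun m _ => ?_
  rw [iteratedDeriv_prod_inv_sq_sub_sq_zero hw, iteratedDeriv_cexp_const_mul]
  simp only [mul_zero, Complex.exp_zero, mul_one]
  ring

/-- for integers `n ≥ 0`, `k ≥ 1`, `N ∈ ℂ` and nonzero `w_1, …, w_k ∈ ℂ`,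
the `n`-th derivative at `α = 0` of `α ↦ e^{−Nα}/∏_i (w_i² − α²)` equals
`(∏_i w_i^{−2}) ∑_{m=0}^n (n choose m)(−N)^{n−m} m! ∑_{l_1+⋯+l_k=m, l_j even} ∏_i w_i^{−l_i}`. -/
theorem stmt_8 (n k : ℕ) (hk : 1 ≤ k) (N : ℂ) (w : Fin k → ℂ) (hw : ∀ i, w i ≠ 0) :
    iteratedDeriv n (fun α : ℂ => Complex.exp (-N * α) / ∏ i, (w i ^ 2 - α ^ 2)) 0 =
      (∏ i, (w i ^ 2)⁻¹) *
        ∑ m ∈ Finset.range (n + 1),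
          (n.choose m : ℂ) * (-N) ^ (n - m) * (m ! : ℂ) *
            ∑ l ∈ (Finset.Nat.antidiagonalTuple k m).filter fun l => ∀ i, Even (l i),
              ∏ i, (w i ^ (l i))⁻¹ :=
  stmt_8_general n k N w hw
end

section
/- Let k ≥ 1 be an integer, let m_1, …, m_k be integers, and let N > 0 be real. Then (1/(2πi))^k ∮_{|w_1|=1} ⋯ ∮_{|w_k|=1} Δ(w) Δ(w²) e^{N∑_{i=1}^k w_i} · ( ∏_{j=1}^k w_j^{−(2k+m_j)} ) dw_1 ⋯ dw_k = ∑_{μ ∈ S_k} det_{k×k}( N^{2k + m_{μ(i)} − 2i − j + 2} / Γ(2k + m_{μ(i)} − 2i − j + 3) ), where in the determinant i, j range from 1 to k, and an entry is taken to be 0 whenever 2k + m_{μ(i)} − 2i − j + 3 is a non-positive integer (i.e. 1/Γ vanishes at the non-positive integers). -/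
/-!
Writing `Δ(w)` and `Δ(w²)` as Vandermonde determinants turns the integrand into a signed sum,
over pairs of permutations `(σ, τ)`, of products `∏ᵢ e^{N wᵢ} wᵢ^{σ(i) + 2τ(i) - 2k - mᵢ}` of
one-variable functions. The iterated integral of such a product is the product of the circle
integrals, and by Cauchy's formula for derivatives
`(2πi)⁻¹ ∮ e^{Nz} z^{-s} dz = N^{s-1}/Γ(s)` (zero for `s ≤ 0`). Reindexing the pair `(σ, τ)` by
`μ = τ⁻¹` and the Leibniz permutation `τσ⁻¹` regroups the double sum into `∑_μ det(⋯)`.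
-/

open scoped Nat

/-- The iterated contour integral
`(∮_{|w₁|=1} ⋯ ∮_{|w_k|=1} F(w₁,…,w_k) dw_k ⋯) dw₁`, each circle traversed once
counterclockwise. -/
noncomputable def multiCircleIntegral : (k : ℕ) → ((Fin k → ℂ) → ℂ) → ℂ
  | 0, F => F ![]
  | k + 1, F => ∮ z in C(0, 1), multiCircleIntegral k fun w => F (Fin.cons z w)

open Complex Finset Equiv Metric
open scoped Real

theorem circleIntegrable_cexp_mul_zpow (a : ℂ) (p : ℤ) {R : ℝ} (hR : R ≠ 0) :
    CircleIntegrable (fun z => cexp (a * z) * z ^ p) 0 R :=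
  ContinuousOn.circleIntegrable' <| by
    fun_prop (disch := exact fun z hz => .inl (ne_zero_of_mem_sphere (abs_ne_zero.2 hR) ⟨z, hz⟩))

theorem two_pi_I_inv_mul_circleIntegral_cexp_mul_zpow {R : ℝ} (hR : 0 < R) (a : ℂ) (p : ℤ) :
    (2 * π * I)⁻¹ * (∮ z in C(0, R), cexp (a * z) * z ^ p) =
      a ^ (-p - 1) / Gamma ((-p : ℤ) : ℂ) := by
  rcases le_or_gt 0 p with hp | hp
  · lift p to ℕ using hp
    have hd : Differentiable ℂ fun z : ℂ => cexp (a * z) * z ^ (p : ℤ) := by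
      simp only [zpow_natCast]; fun_prop
    rw [circleIntegral_eq_zero_of_differentiable_on_off_countable hR.le Set.countable_empty
      hd.continuous.continuousOn fun z _ => hd z]
    simp [Complex.Gamma_neg_nat_eq_zero]
  · obtain ⟨n, rfl⟩ : ∃ n : ℕ, p = -(n + 1 : ℕ) := ⟨(-p - 1).toNat, by omega⟩
    have hd : Differentiable ℂ fun z : ℂ => cexp (a * z) := by fun_prop
    have hcauchy := hd.differentiableOn.circleIntegral_one_div_sub_center_pow_smul (c := 0) hR n
    rw [iteratedDeriv_cexp_const_mul] at hcauchy
    simp only [sub_zero, smul_eq_mul, one_div, mul_zero, Complex.exp_zero, mul_one] at hcauchy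
    have hexp : ((n + 1 : ℕ) : ℤ) - 1 = n := by omega
    have hΓ : Gamma ((n + 1 : ℕ) : ℂ) = n ! := by rw [Nat.cast_succ, Gamma_nat_eq_factorial]
    rw [neg_neg, hexp, Int.cast_natCast, hΓ, zpow_natCast]
    simp_rw [zpow_neg, zpow_natCast, mul_comm (cexp _), hcauchy]
    field_simp

-- `Matrix.det_vandermonde` has the factors `v j - v i`; the two sign changes cancel.
theorem prod_Ioi_sub_mul_prod_Ioi_sub {R : Type*} [CommRing R] {n : ℕ} (v u : Fin n → R) :
    (∏ i, ∏ j ∈ Ioi i, (v i - v j)) * ∏ i, ∏ j ∈ Ioi i, (u i - u j) =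
      (Matrix.vandermonde v).det * (Matrix.vandermonde u).det := by
  simp only [Matrix.det_vandermonde, ← prod_mul_distrib]
  exact prod_congr rfl fun i _ => prod_congr rfl fun j _ => by ring

theorem det_vandermonde_eq_sum_sign {R : Type*} [CommRing R] {n : ℕ} (v : Fin n → R) :
    (Matrix.vandermonde v).det = ∑ σ : Perm (Fin n), Perm.sign σ • ∏ i, v i ^ (σ i : ℕ) := by
  rw [← Matrix.det_transpose, Matrix.det_apply]
  rfl

theorem prod_sub_mul_prod_sq_sub_mul_cexp_eq_sum {k : ℕ} (e : Fin k → ℤ) (a : ℂ)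
    {w : Fin k → ℂ} (hw : ∀ i, w i ≠ 0) :
    (∏ i, ∏ j ∈ Ioi i, (w i - w j)) * (∏ i, ∏ j ∈ Ioi i, (w i ^ 2 - w j ^ 2)) *
        cexp (a * ∑ i, w i) * ∏ i, (w i ^ e i)⁻¹ =
      ∑ σ : Perm (Fin k), ∑ τ : Perm (Fin k), (Perm.sign σ * Perm.sign τ) •
        ∏ i, cexp (a * w i) * w i ^ ((σ i : ℕ) + 2 * (τ i : ℕ) - e i : ℤ) := by
  rw [prod_Ioi_sub_mul_prod_Ioi_sub w (fun i => w i ^ 2), det_vandermonde_eq_sum_sign,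
    det_vandermonde_eq_sum_sign, sum_mul_sum, mul_sum, exp_sum, sum_mul, sum_mul]
  refine sum_congr rfl fun σ _ => ?_
  rw [sum_mul, sum_mul]
  refine sum_congr rfl fun τ _ => ?_
  rw [smul_mul_smul_comm, smul_mul_assoc, smul_mul_assoc]
  congr 1
  simp only [← prod_mul_distrib]
  refine prod_congr rfl fun i _ => ?_
  rw [zpow_sub₀ (hw i), div_eq_mul_inv, zpow_add₀ (hw i), zpow_natCast, zpow_mul, zpow_natCast,
    zpow_ofNat]
  ring

-- Reindex the row permutation as `μ = τ⁻¹` and the Leibniz permutation as `τ * σ⁻¹`.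
theorem sum_det_of_perm_rows {n R : Type*} [Fintype n] [DecidableEq n] [CommRing R]
    (F : n → n → n → R) :
    ∑ μ : Perm n, (Matrix.of fun i j => F (μ i) i j).det =
      ∑ σ : Perm n, ∑ τ : Perm n, (Perm.sign σ * Perm.sign τ) • ∏ i, F i (τ i) (σ i) := by
  rw [sum_comm, ← Fintype.sum_equiv (Equiv.inv (Perm n)) _ _ fun _ => rfl]
  refine sum_congr rfl fun τ _ => ?_
  rw [Matrix.det_apply, ← Fintype.sum_equiv ((Equiv.inv (Perm n)).trans (Equiv.mulLeft τ)) _ _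
    fun _ => rfl]
  refine sum_congr rfl fun σ _ => ?_
  simp only [Equiv.trans_apply, Equiv.inv_apply, Equiv.coe_mulLeft, Perm.sign_mul, Perm.sign_inv,
    Matrix.of_apply, Perm.mul_apply, mul_comm (Perm.sign τ)]
  congr 1
  exact (Fintype.prod_equiv σ _ _ fun i => by simp).symm

theorem multiCircleIntegral_congr {k : ℕ} {F G : (Fin k → ℂ) → ℂ}
    (h : ∀ w : Fin k → ℂ, (∀ i, w i ∈ sphere (0 : ℂ) 1) → F w = G w) :
    multiCircleIntegral k F = multiCircleIntegral k G := by
  induction k with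
  | zero => exact h ![] finZeroElim
  | succ k ih =>
    refine circleIntegral.integral_congr zero_le_one fun z hz => ih fun w hw => h _ ?_
    exact Fin.cases (by simpa using hz) (by simpa using hw)

theorem multiCircleIntegral_sum_mul_prod {k : ℕ} {T : Type*} [Fintype T] (c : T → ℂ)
    (G : T → Fin k → ℂ → ℂ) (hG : ∀ t i, CircleIntegrable (G t i) 0 1) :
    multiCircleIntegral k (fun w => ∑ t, c t * ∏ i, G t i (w i)) =
      ∑ t, c t * ∏ i, ∮ z in C(0, 1), G t i z := by
  induction k generalizing T with
  | zero => simp [multiCircleIntegral]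
  | succ k ih =>
    have hslice : ∀ z, (multiCircleIntegral k fun w =>
        ∑ t, c t * ∏ i, G t i ((Fin.cons z w : Fin (k + 1) → ℂ) i)) =
          ∑ t, (c t * G t 0 z) * ∏ i : Fin k, ∮ x in C(0, 1), G t i.succ x := by
      intro z
      rw [← ih _ (fun t i => G t i.succ) fun t i => hG t i.succ]
      simp only [Fin.prod_univ_succ, Fin.cons_zero, Fin.cons_succ, mul_assoc]
    have hint : ∀ t, CircleIntegrable
        (fun z => c t * G t 0 z * ∏ i : Fin k, ∮ x in C(0, 1), G t i.succ x) 0 1 := fun t =>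
      ((hG t 0).const_fun_smul (a := c t)).fun_mul_continuousOn continuousOn_const
    simp only [multiCircleIntegral, hslice]
    rw [circleIntegral.integral_fun_sum fun t _ => hint t]
    refine sum_congr rfl fun t _ => ?_
    simp only [mul_assoc, circleIntegral.integral_const_mul, Fin.prod_univ_succ]
    exact congrArg (c t * ·) (circleIntegral.integral_smul_const _ _ _ _)

/-- Lean indices `i j : Fin k` stand for `i+1, j+1 ∈ {1,…,k}`, which shifts the exponents.
`Complex.Gamma` vanishes at the non-positive integers, so with `x / 0 = 0` those entries are `0`,
matching the convention `1/Γ = 0` there. -/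
theorem stmt_12_general (k : ℕ) (m : Fin k → ℤ) (N : ℝ) :
    ((2 * (Real.pi : ℂ) * Complex.I)⁻¹) ^ k *
        multiCircleIntegral k (fun w =>
          (∏ i : Fin k, ∏ j ∈ Finset.Ioi i, (w i - w j)) *
            (∏ i : Fin k, ∏ j ∈ Finset.Ioi i, (w i ^ 2 - w j ^ 2)) *
            Complex.exp ((N : ℂ) * ∑ i, w i) *
            ∏ j : Fin k, (w j ^ (2 * (k : ℤ) + m j))⁻¹) =
      ∑ μ : Equiv.Perm (Fin k),
        Matrix.det (Matrix.of fun i j : Fin k =>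
          ((N : ℂ) ^ (2 * (k : ℤ) + m (μ i) - 2 * ((i : ℕ) : ℤ) - ((j : ℕ) : ℤ) - 1)) /
            Complex.Gamma
              ((2 * (k : ℤ) + m (μ i) - 2 * ((i : ℕ) : ℤ) - ((j : ℕ) : ℤ) : ℤ) : ℂ)) := by
  rw [multiCircleIntegral_congr fun w hw => prod_sub_mul_prod_sq_sub_mul_cexp_eq_sum
      (fun j => 2 * (k : ℤ) + m j) N fun i => ne_zero_of_mem_sphere one_ne_zero ⟨w i, hw i⟩,
    sum_det_of_perm_rows fun a (i j : Fin k) =>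
      (N : ℂ) ^ (2 * (k : ℤ) + m a - 2 * ((i : ℕ) : ℤ) - ((j : ℕ) : ℤ) - 1) /
        Gamma ((2 * (k : ℤ) + m a - 2 * ((i : ℕ) : ℤ) - ((j : ℕ) : ℤ) : ℤ) : ℂ)]
  simp only [← Fintype.sum_prod_type', Units.smul_def, zsmul_eq_mul]
  set p : Perm (Fin k) × Perm (Fin k) → Fin k → ℤ :=
    fun t i => (t.1 i : ℕ) + 2 * (t.2 i : ℕ) - (2 * (k : ℤ) + m i)
  rw [multiCircleIntegral_sum_mul_prod (fun t => (((Perm.sign t.1 * Perm.sign t.2 : ℤˣ) : ℤ) : ℂ))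
      (fun t i z => cexp (N * z) * z ^ p t i)
      fun t i => circleIntegrable_cexp_mul_zpow N (p t i) one_ne_zero,
    mul_sum]
  refine sum_congr rfl fun t _ => ?_
  rw [mul_left_comm, ← Fin.prod_const k (2 * (π : ℂ) * I)⁻¹, ← prod_mul_distrib]
  congr 1
  refine prod_congr rfl fun i _ => ?_
  rw [two_pi_I_inv_mul_circleIntegral_cexp_mul_zpow one_pos]
  congr 2 <;> simp only [p] <;> push_cast <;> ring

/-- for an integer `k ≥ 1`, integers `m_1, …, m_k` and a real `N > 0`,
`(1/(2πi))^k ∮⋯∮ Δ(w)Δ(w²) e^{N∑w_i} ∏_j w_j^{−(2k+m_j)} dw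
  = ∑_{μ ∈ S_k} det_{k×k}( N^{2k+m_{μ(i)}−2i−j+2} / Γ(2k+m_{μ(i)}−2i−j+3) )`,
with `1/Γ = 0` at non-positive integers (Mathlib's `Complex.Gamma` vanishes there).
Lean indices `i j : Fin k` correspond to `i+1, j+1 ∈ {1,…,k}`. -/
theorem stmt_12 (k : ℕ) (hk : 1 ≤ k) (m : Fin k → ℤ) (N : ℝ) (hN : 0 < N) :
    ((2 * (Real.pi : ℂ) * Complex.I)⁻¹) ^ k *
        multiCircleIntegral k (fun w =>
          (∏ i : Fin k, ∏ j ∈ Finset.Ioi i, (w i - w j)) *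
            (∏ i : Fin k, ∏ j ∈ Finset.Ioi i, (w i ^ 2 - w j ^ 2)) *
            Complex.exp ((N : ℂ) * ∑ i, w i) *
            ∏ j : Fin k, (w j ^ (2 * (k : ℤ) + m j))⁻¹) =
      ∑ μ : Equiv.Perm (Fin k),
        Matrix.det (Matrix.of fun i j : Fin k =>
          ((N : ℂ) ^ (2 * (k : ℤ) + m (μ i) - 2 * ((i : ℕ) : ℤ) - ((j : ℕ) : ℤ) - 1)) /
            Complex.Gamma
              ((2 * (k : ℤ) + m (μ i) - 2 * ((i : ℕ) : ℤ) - ((j : ℕ) : ℤ) : ℤ) : ℂ)) :=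
  stmt_12_general k m N
end

section
/- Let k ≥ 1 be an integer and let m_1, …, m_k be non-negative integers. Then det_{k×k}( 1/Γ(2k + m_i − 2i − j + 2) ) = ( ∏_{j=1}^k 1/(2k + m_j − 2j)! ) · ∏_{1≤i<j≤k} (m_j − m_i − 2j + 2i), where in the determinant i, j range from 1 to k, and 1/Γ(z) is taken to be 0 whenever z is a non-positive integer. -/
/-!
With `a i = 2k + m i - 2(i+1)`, the `(i, j)` entry is
`1/Γ(a i - j + 1) = a i (a i - 1) ⋯ (a i - j + 1) / (a i)!`, which also covers the poles
since the falling factorial vanishes for `j > a i`.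
Pulling `1/(a i)!` out of each row leaves the matrix of the monic falling-factorial
polynomials of degree `j` evaluated at the `a i`, whose determinant is the Vandermonde
determinant `∏_{i<j} (a j - a i)`.
-/

open scoped Nat

open Polynomial

theorem Complex.inv_Gamma_intCast_sub_add_one (a j : ℕ) :
    (Complex.Gamma (((a : ℤ) - j + 1 : ℤ) : ℂ))⁻¹ = (a.descFactorial j : ℂ) / (a ! : ℂ) := by
  rcases le_or_gt j a with hja | haj
  · have harg : ((a : ℤ) - j + 1 : ℤ) = ((a - j : ℕ) : ℤ) + 1 := by push_cast [hja]; ring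
    have hfact : ((a - j)! : ℂ) * a.descFactorial j = a ! := by
      exact_mod_cast Nat.factorial_mul_descFactorial hja
    have hdesc : (a.descFactorial j : ℂ) ≠ 0 := by
      exact_mod_cast (Nat.descFactorial_pos.mpr hja).ne'
    rw [harg, Int.cast_add, Int.cast_natCast, Int.cast_one, Complex.Gamma_nat_eq_factorial,
      ← hfact, mul_comm, ← div_div, div_self hdesc, one_div]
  · have hpole : ((a : ℤ) - j + 1 : ℤ) = -((j - a - 1 : ℕ) : ℤ) := by omega
    rw [hpole, Int.cast_neg, Int.cast_natCast, Complex.Gamma_neg_nat_eq_zero,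
      Nat.descFactorial_eq_zero_iff_lt.mpr haj]
    simp

theorem Matrix.det_descPochhammer_eval {R : Type*} [CommRing R] [IsDomain R] {n : ℕ}
    (x : Fin n → R) :
    Matrix.det (Matrix.of fun i j : Fin n => (descPochhammer R j).eval (x i)) =
      ∏ i : Fin n, ∏ j ∈ Finset.Ioi i, (x j - x i) := by
  rw [← Matrix.det_vandermonde]
  exact (Matrix.det_eval_matrixOfPolynomials_eq_det_vandermonde x (fun j => descPochhammer R j)
    (fun j => descPochhammer_natDegree R j) (fun j => monic_descPochhammer R j)).symm

theorem stmt_13_general (k : ℕ) (m : Fin k → ℕ) :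
    Matrix.det (Matrix.of fun i j : Fin k =>
        (Complex.Gamma ((2 * (k : ℤ) + (m i : ℤ) - 2 * ((i : ℕ) : ℤ) - ((j : ℕ) : ℤ) - 1 : ℤ) : ℂ))⁻¹) =
      (∏ j : Fin k, (((2 * k + m j - 2 * ((j : ℕ) + 1))! : ℕ) : ℂ)⁻¹) *
        ∏ i : Fin k, ∏ j ∈ Finset.Ioi i,
          ((m j : ℂ) - (m i : ℂ) - 2 * ((j : ℕ) : ℂ) + 2 * ((i : ℕ) : ℂ)) := by
  set a : Fin k → ℕ := fun i => 2 * k + m i - 2 * ((i : ℕ) + 1)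
  have ha : ∀ i, (a i : ℤ) = 2 * k + m i - 2 * (i : ℕ) - 2 := fun i => by
    have := i.2; simp only [a]; omega
  have hentry : ∀ i j : Fin k,
      (Complex.Gamma ((2 * (k : ℤ) + (m i : ℤ) - 2 * ((i : ℕ) : ℤ) - ((j : ℕ) : ℤ) - 1 : ℤ) : ℂ))⁻¹
        = ((a i)! : ℂ)⁻¹ * (descPochhammer ℂ j).eval (a i : ℂ) := fun i j => by
    rw [descPochhammer_eval_eq_descFactorial, inv_mul_eq_div,
      ← Complex.inv_Gamma_intCast_sub_add_one, ha]
    congr 3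
    ring
  calc _ = Matrix.det (Matrix.of fun i j : Fin k =>
          ((a i)! : ℂ)⁻¹ * (descPochhammer ℂ j).eval (a i : ℂ)) := by simp_rw [hentry]
    _ = (∏ i, ((a i)! : ℂ)⁻¹) * ∏ i : Fin k, ∏ j ∈ Finset.Ioi i, ((a j : ℂ) - a i) := by
      rw [← Matrix.det_descPochhammer_eval, ← Matrix.det_mul_column]
      rfl
    _ = _ := by
      have hac : ∀ i, (a i : ℂ) = 2 * k + m i - 2 * (i : ℕ) - 2 := fun i => by
        exact_mod_cast ha i
      congr 1
      refine Finset.prod_congr rfl fun i _ => Finset.prod_congr rfl fun j _ => ?_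
      rw [hac, hac]
      ring

/-- For `k ≥ 1` and non-negative integers `m_1, …, m_k`,
`det_{k×k}(1/Γ(2k + m_i − 2i − j + 2)) = (∏_{j=1}^k 1/(2k+m_j−2j)!) · ∏_{1≤i<j≤k}(m_j − m_i − 2j + 2i)`,
with the convention `1/Γ(z) = 0` at non-positive integers `z` (Mathlib's `Complex.Gamma`
vanishes at non-positive integers, so `(Complex.Gamma z)⁻¹ = 0` there).
Here the Lean indices `i j : Fin k` correspond to `i+1, j+1 ∈ {1,…,k}`. -/
theorem stmt_13 (k : ℕ) (hk : 1 ≤ k) (m : Fin k → ℕ) :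
    Matrix.det (Matrix.of fun i j : Fin k =>
        (Complex.Gamma ((2 * (k : ℤ) + (m i : ℤ) - 2 * ((i : ℕ) : ℤ) - ((j : ℕ) : ℤ) - 1 : ℤ) : ℂ))⁻¹) =
      (∏ j : Fin k, (((2 * k + m j - 2 * ((j : ℕ) + 1))! : ℕ) : ℂ)⁻¹) *
        ∏ i : Fin k, ∏ j ∈ Finset.Ioi i,
          ((m j : ℂ) - (m i : ℂ) - 2 * ((j : ℕ) : ℂ) + 2 * ((i : ℕ) : ℂ)) :=
  stmt_13_general k m
end
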